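/- Let φ : S → ℝ be any bounded function (potential) on the state space of an MDP with discount γ ∈ (0,1), and define the shaped reward r'(s,a,s') = r(s,a,s') + γ·φ(s') - φ(s). Then for any policy π and any state-action pair (s,a), the shaped action-value function satisfies Q'^π(s,a) = Q^π(s,a) - φ(s); in particular, argmax_a Q'^π(s,a) = argmax_a Q^π(s,a) for every state s, so potential-based shaping preserves optimal policies. -/

import Mathlib

open Finset

/-- Bellman's evaluation equation, whose solution is `Q^π` for the deterministic policy `π`. -/
def IsActionValue {S A : Type*} [Fintype S] (γ : ℝ) (P : S → A → S → ℝ) (r : S → A → S → ℝ)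
    (π : S → A) (Q : S → A → ℝ) : Prop :=
  ∀ s a, Q s a = ∑ s', P s a s' * (r s a s' + γ * Q s' (π s'))

lemma abs_sum_mul_le_of_abs_le {ι : Type*} (s : Finset ι) {w f : ι → ℝ} {M : ℝ}
    (hw0 : ∀ i ∈ s, 0 ≤ w i) (hw1 : ∑ i ∈ s, w i = 1) (hf : ∀ i ∈ s, |f i| ≤ M) :
    |∑ i ∈ s, w i * f i| ≤ M :=
  calc |∑ i ∈ s, w i * f i| ≤ ∑ i ∈ s, w i * |f i| := by
        refine (abs_sum_le_sum_abs _ _).trans (le_of_eq (sum_congr rfl fun i hi => ?_))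
        rw [abs_mul, abs_of_nonneg (hw0 i hi)]
    _ ≤ ∑ i ∈ s, w i * M := sum_le_sum fun i hi => mul_le_mul_of_nonneg_left (hf i hi) (hw0 i hi)
    _ = M := by rw [← sum_mul, hw1, one_mul]

section ActionValue

variable {S A : Type*} [Fintype S] {γ : ℝ} {P : S → A → S → ℝ} {r : S → A → S → ℝ} {π : S → A}

lemma IsActionValue.sub_potential (hP1 : ∀ s a, ∑ s', P s a s' = 1) {Q : S → A → ℝ}
    (hQ : IsActionValue γ P r π Q) (φ : S → ℝ) :
    IsActionValue γ P (fun s a s' => r s a s' + γ * φ s' - φ s) π (fun s a => Q s a - φ s) := by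
  intro s a
  beta_reduce
  have hφ : ∑ s', P s a s' * φ s = φ s := by rw [← sum_mul, hP1, one_mul]
  rw [hQ s a]
  conv_lhs => rw [← hφ, ← sum_sub_distrib]
  exact sum_congr rfl fun s' _ => by ring

/-- The evaluation equation is a `|γ|`-contraction in the sup norm over states, so it has at most
one solution. -/
lemma IsActionValue.unique (hγ : |γ| < 1) (hP0 : ∀ s a s', 0 ≤ P s a s')
    (hP1 : ∀ s a, ∑ s', P s a s' = 1) {Q₁ Q₂ : S → A → ℝ}
    (h₁ : IsActionValue γ P r π Q₁) (h₂ : IsActionValue γ P r π Q₂) : Q₁ = Q₂ := by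
  set d : S → ℝ := fun t => Q₁ t (π t) - Q₂ t (π t)
  have hdiff : ∀ s a, Q₁ s a - Q₂ s a = γ * ∑ s', P s a s' * d s' := by
    intro s a
    rw [h₁ s a, h₂ s a, ← sum_sub_distrib, mul_sum]
    exact sum_congr rfl fun s' _ => by ring
  have hbound : ∀ s a, |Q₁ s a - Q₂ s a| ≤ |γ| * ‖d‖ := fun s a => by
    rw [hdiff, abs_mul]
    exact mul_le_mul_of_nonneg_left (abs_sum_mul_le_of_abs_le univ (fun s' _ => hP0 s a s')
      (hP1 s a) fun s' _ => norm_le_pi_norm d s') (abs_nonneg γ)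
  have hd : ‖d‖ = 0 := by
    have : ‖d‖ ≤ |γ| * ‖d‖ :=
      (pi_norm_le_iff_of_nonneg (by positivity)).2 fun t => hbound t (π t)
    nlinarith [norm_nonneg d]
  funext s a
  have := hbound s a
  rw [hd, mul_zero, abs_nonpos_iff, sub_eq_zero] at this
  exact this

end ActionValue

theorem potential_shaping_preserves_values_general {S A : Type*} [Fintype S]
    (γ : ℝ) (hγ0 : 0 < γ) (hγ1 : γ < 1)
    (P : S → A → S → ℝ) (hP0 : ∀ s a s', 0 ≤ P s a s')
    (hP1 : ∀ s a, ∑ s', P s a s' = 1)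
    (r : S → A → S → ℝ) (φ : S → ℝ) (π : S → A)
    (Q Q' : S → A → ℝ)
    (hQ : ∀ s a, Q s a = ∑ s', P s a s' * (r s a s' + γ * Q s' (π s')))
    (hQ' : ∀ s a, Q' s a =
      ∑ s', P s a s' * ((r s a s' + γ * φ s' - φ s) + γ * Q' s' (π s'))) :
    (∀ s a, Q' s a = Q s a - φ s) ∧
    (∀ s a, (∀ b, Q' s b ≤ Q' s a) ↔ (∀ b, Q s b ≤ Q s a)) := by
  have hγ : |γ| < 1 := abs_lt.2 ⟨by linarith, hγ1⟩
  have hshift : Q' = fun s a => Q s a - φ s :=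
    IsActionValue.unique hγ hP0 hP1 hQ' (IsActionValue.sub_potential hP1 hQ φ)
  subst hshift
  exact ⟨fun _ _ => rfl, fun _ _ => by simp only [sub_le_sub_iff_right]⟩

theorem potential_shaping_preserves_values {S A : Type*} [Fintype S] [Fintype A]
    (γ : ℝ) (hγ0 : 0 < γ) (hγ1 : γ < 1)
    (P : S → A → S → ℝ) (hP0 : ∀ s a s', 0 ≤ P s a s')
    (hP1 : ∀ s a, ∑ s', P s a s' = 1)
    (r : S → A → S → ℝ) (φ : S → ℝ) (π : S → A)
    (Q Q' : S → A → ℝ)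
    (hQ : ∀ s a, Q s a = ∑ s', P s a s' * (r s a s' + γ * Q s' (π s')))
    (hQ' : ∀ s a, Q' s a =
      ∑ s', P s a s' * ((r s a s' + γ * φ s' - φ s) + γ * Q' s' (π s'))) :
    (∀ s a, Q' s a = Q s a - φ s) ∧
    (∀ s a, (∀ b, Q' s b ≤ Q' s a) ↔ (∀ b, Q s b ≤ Q s a)) :=
  potential_shaping_preserves_values_general γ hγ0 hγ1 P hP0 hP1 r φ π Q Q' hQ hQ'
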